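/- A Banach space X is ASQ if and only if X ε-fails the intersection property for every 0 < ε < 1, i.e., for every 0 < ε < 1, sup over finite families x_1,…,x_n with ‖x_i‖ < 1 of inf over y with ε < ‖y‖ ≤ 1 of max_i ‖x_i − y‖ equals 1. -/

import Mathlib

/-!
For the pair `{x, -x}` one has `2‖x‖ ≤ ‖x - y‖ + ‖x + y‖`, so `γ(ε) ≥ 1` for `ε < 1` in every
nontrivial space, and `γ(ε) = 1` says that every finite family in the open unit ball lies within
`1 + η` of some `y` with `ε < ‖y‖ ≤ 1`, for every `η > 0`.

ASQ even gives such a `y` within distance `1`: pick `t < 1` above `ε` and all `‖xᵢ‖`, apply ASQ to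
the normalized `xᵢ` with tolerance `1 - t`, and take `t • y`. Conversely, for unit vectors `xᵢ`
apply `γ(1 - δ) = 1` to the family `±(1 - δ) xᵢ`: the resulting `y` has norm `> 1 - δ`, so
normalizing `y` and rescaling the `xᵢ` each cost at most `δ`.
-/

/-- A Banach space is almost square (ASQ). -/
def IsASQ (X : Type*) [NormedAddCommGroup X] [NormedSpace ℝ X] : Prop :=
  ∀ S : Finset X, (∀ x ∈ S, ‖x‖ = 1) → ∀ ε : ℝ, 0 < ε →
    ∃ y : X, ‖y‖ = 1 ∧ ∀ x ∈ S, ‖x + y‖ ≤ 1 + ε ∧ ‖x - y‖ ≤ 1 + ε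

/-- The index `γ(ε)`: the supremum over nonempty finite families of vectors of norm `< 1`
of the infimum over `y` with `ε < ‖y‖ ≤ 1` of `max_i ‖x_i - y‖`. -/
noncomputable def gammaIP (X : Type*) [NormedAddCommGroup X] [NormedSpace ℝ X]
    (ε : ℝ) : ℝ :=
  ⨆ S : {S : Finset X // S.Nonempty ∧ ∀ x ∈ S, ‖x‖ < 1},
    ⨅ y : {y : X // ε < ‖y‖ ∧ ‖y‖ ≤ 1},
      S.1.sup' S.2.1 (fun x => ‖x - (y : X)‖)

theorem Finset.exists_between_forall_lt {α : Type*} (S : Finset α) (f : α → ℝ) {a b : ℝ}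
    (ha : a < b) (hS : ∀ x ∈ S, f x < b) : ∃ t, a < t ∧ (∀ x ∈ S, f x < t) ∧ t < b := by
  classical
  have hne : (insert a (S.image f)).Nonempty := Finset.insert_nonempty _ _
  have hm : (insert a (S.image f)).max' hne < b := by
    simpa [Finset.max'_lt_iff] using ⟨ha, hS⟩
  obtain ⟨t, hmt, htb⟩ := _root_.exists_between hm
  have hlt : ∀ r ∈ insert a (S.image f), r < t := fun r hr =>
    (Finset.le_max' _ r hr).trans_lt hmt
  exact ⟨t, hlt a (Finset.mem_insert_self _ _),
    fun x hx => hlt (f x) (Finset.mem_insert_of_mem (Finset.mem_image_of_mem f hx)), htb⟩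

section

variable {X : Type*} [NormedAddCommGroup X]

noncomputable def gammaIPRadius (ε : ℝ) (S : Finset X) (hS : S.Nonempty) : ℝ :=
  ⨅ y : {y : X // ε < ‖y‖ ∧ ‖y‖ ≤ 1}, S.sup' hS fun x => ‖x - (y : X)‖

def EpsFailsIntersection (X : Type*) [NormedAddCommGroup X] (ε : ℝ) : Prop :=
  ∀ S : Finset X, (∀ x ∈ S, ‖x‖ < 1) → ∀ η > 0,
    ∃ y : X, (ε < ‖y‖ ∧ ‖y‖ ≤ 1) ∧ ∀ x ∈ S, ‖x - y‖ ≤ 1 + η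

theorem gammaIPRadius_le {ε c : ℝ} {S : Finset X} (hS : S.Nonempty) {y : X}
    (hy : ε < ‖y‖ ∧ ‖y‖ ≤ 1) (h : ∀ x ∈ S, ‖x - y‖ ≤ c) : gammaIPRadius ε S hS ≤ c := by
  refine ciInf_le_of_le ⟨0, ?_⟩ ⟨y, hy⟩ (Finset.sup'_le _ _ h)
  rintro _ ⟨z, rfl⟩
  obtain ⟨a, ha⟩ := hS
  exact (norm_nonneg _).trans (Finset.le_sup' (fun x => ‖x - (z : X)‖) ha)

variable [NormedSpace ℝ X]

theorem gammaIP_eq_iSup_gammaIPRadius (ε : ℝ) :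
    gammaIP X ε = ⨆ S : {S : Finset X // S.Nonempty ∧ ∀ x ∈ S, ‖x‖ < 1},
      gammaIPRadius ε S.1 S.2.1 :=
  rfl

theorem nonempty_norm_mem_Ioc [Nontrivial X] {ε : ℝ} (hε : ε < 1) :
    Nonempty {y : X // ε < ‖y‖ ∧ ‖y‖ ≤ 1} :=
  let ⟨y, hy⟩ := exists_norm_eq X zero_le_one
  ⟨⟨y, by rw [hy]; exact ⟨hε, le_rfl⟩⟩⟩

theorem exists_forall_norm_sub_lt_of_gammaIPRadius_lt [Nontrivial X]
    {ε c : ℝ} (hε : ε < 1) {S : Finset X} {hS : S.Nonempty} (h : gammaIPRadius ε S hS < c) :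
    ∃ y : X, (ε < ‖y‖ ∧ ‖y‖ ≤ 1) ∧ ∀ x ∈ S, ‖x - y‖ < c := by
  have := nonempty_norm_mem_Ioc (X := X) hε
  obtain ⟨⟨y, hy⟩, hyS⟩ := exists_lt_of_ciInf_lt h
  exact ⟨y, hy, fun x hx => (Finset.le_sup' (fun x => ‖x - y‖) hx).trans_lt hyS⟩

theorem norm_le_gammaIPRadius_pair [Nontrivial X] [DecidableEq X] {ε : ℝ}
    (hε : ε < 1) (x : X) : ‖x‖ ≤ gammaIPRadius ε {x, -x} (Finset.insert_nonempty _ _) := by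
  have := nonempty_norm_mem_Ioc (X := X) hε
  refine le_ciInf fun y => ?_
  have hsub := Finset.le_sup' (fun z => ‖z - (y : X)‖) (Finset.mem_insert_self x {-x})
  have hadd := Finset.le_sup' (fun z => ‖z - (y : X)‖)
    (Finset.mem_insert_of_mem (Finset.mem_singleton_self (-x)) : -x ∈ ({x, -x} : Finset X))
  have htwo : 2 * ‖x‖ ≤ ‖x - y‖ + ‖-x - y‖ :=
    calc 2 * ‖x‖ = ‖(2 : ℝ) • x‖ := by rw [norm_smul, Real.norm_two]
      _ = ‖(x - y) - (-x - y)‖ := by congr 1; module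
      _ ≤ _ := norm_sub_le _ _
  linarith

theorem nontrivial_of_gammaIP_eq_one {ε : ℝ} (hε : 0 ≤ ε)
    (h : gammaIP X ε = 1) : Nontrivial X := by
  by_contra hX
  rw [not_nontrivial_iff_subsingleton] at hX
  have : IsEmpty {y : X // ε < ‖y‖ ∧ ‖y‖ ≤ 1} :=
    ⟨fun y => by simpa [Subsingleton.elim y.1 0, hε.not_gt] using y.2.1⟩
  simp [gammaIP] at h

theorem gammaIP_eq_one_iff [Nontrivial X] {ε : ℝ} (hε : ε < 1) :
    gammaIP X ε = 1 ↔ EpsFailsIntersection X ε := by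
  classical
  rw [gammaIP_eq_iSup_gammaIPRadius]
  constructor
  · intro h S hS η hη
    have hbdd : BddAbove (Set.range fun S : {S : Finset X // S.Nonempty ∧ ∀ x ∈ S, ‖x‖ < 1} =>
        gammaIPRadius ε S.1 S.2.1) := by
      by_contra hb
      rw [Real.iSup_of_not_bddAbove hb] at h
      exact zero_ne_one h
    have h0S : ∀ x ∈ insert 0 S, ‖x‖ < 1 := by simpa using hS
    have hlt : gammaIPRadius ε (insert 0 S) (Finset.insert_nonempty _ _) < 1 + η :=
      (le_ciSup hbdd ⟨insert 0 S, Finset.insert_nonempty _ _, h0S⟩).trans_lt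
      (by rw [h]; linarith)
    obtain ⟨y, hy, hyS⟩ := exists_forall_norm_sub_lt_of_gammaIPRadius_lt hε hlt
    exact ⟨y, hy, fun x hx => (hyS x (Finset.mem_insert_of_mem hx)).le⟩
  · intro h
    have hle : ∀ S : {S : Finset X // S.Nonempty ∧ ∀ x ∈ S, ‖x‖ < 1},
        gammaIPRadius ε S.1 S.2.1 ≤ 1 := fun S =>
      le_of_forall_pos_le_add fun η hη =>
        let ⟨y, hy, hyS⟩ := h S.1 S.2.2 η hη
        gammaIPRadius_le S.2.1 hy hyS
    refine le_antisymm (Real.iSup_le hle zero_le_one) (le_of_forall_lt fun c hc => ?_)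
    obtain ⟨t, hct, ht1⟩ := exists_between (max_lt hc one_pos)
    obtain ⟨x, hx⟩ := exists_norm_eq X ((le_max_right c 0).trans hct.le)
    have hpair : ∀ z ∈ ({x, -x} : Finset X), ‖z‖ < 1 := by simp [hx, ht1]
    calc c < t := (le_max_left c 0).trans_lt hct
      _ = ‖x‖ := hx.symm
      _ ≤ gammaIPRadius ε {x, -x} _ := norm_le_gammaIPRadius_pair hε x
      _ ≤ _ := le_ciSup (f := fun S : {S : Finset X // S.Nonempty ∧ ∀ x ∈ S, ‖x‖ < 1} =>
          gammaIPRadius ε S.1 S.2.1) ⟨1, by rintro _ ⟨S, rfl⟩; exact hle S⟩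
          ⟨{x, -x}, Finset.insert_nonempty _ _, hpair⟩

theorem IsASQ.nontrivial (h : IsASQ X) : Nontrivial X := by
  obtain ⟨y, hy, -⟩ := h ∅ (by simp) 1 one_pos
  exact nontrivial_of_ne y 0 (norm_ne_zero_iff.mp (by simp [hy]))

theorem norm_smul_sub_smul_le_one {u y : X} (hy : ‖y‖ = 1) {s t : ℝ} (hs : 0 ≤ s)
    (hst : s ≤ t) (ht : t ≤ 1) (huy : ‖u - y‖ ≤ 2 - t) : ‖s • u - t • y‖ ≤ 1 :=
  calc ‖s • u - t • y‖ = ‖s • (u - y) + (s - t) • y‖ := by congr 1; module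
    _ ≤ s * ‖u - y‖ + (t - s) := by
      grw [norm_add_le, norm_smul, norm_smul, hy, Real.norm_of_nonneg hs,
        Real.norm_of_nonpos (by linarith)]
      linarith
    _ ≤ 1 := by nlinarith

theorem IsASQ.exists_forall_norm_sub_le_one (h : IsASQ X) {ε : ℝ} (hε0 : 0 ≤ ε) (hε : ε < 1)
    {S : Finset X} (hS : ∀ x ∈ S, ‖x‖ < 1) :
    ∃ y : X, (ε < ‖y‖ ∧ ‖y‖ ≤ 1) ∧ ∀ x ∈ S, ‖x - y‖ ≤ 1 := by
  classical
  obtain ⟨t, hεt, hSt, ht1⟩ := S.exists_between_forall_lt norm hε hS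
  have ht0 : 0 < t := hε0.trans_lt hεt
  obtain ⟨y, hy, hyU⟩ := h ((S.filter (· ≠ 0)).image fun x => ‖x‖⁻¹ • x)
    (by
      simp only [Finset.mem_image, Finset.mem_filter, forall_exists_index, and_imp]
      rintro _ x - hx0 rfl
      exact norm_smul_inv_norm hx0) (1 - t) (by linarith)
  refine ⟨t • y, by simp [norm_smul, hy, abs_of_pos ht0, hεt, ht1.le], fun x hx => ?_⟩
  rcases eq_or_ne x 0 with rfl | hx0
  · simpa [norm_smul, hy, abs_of_pos ht0] using ht1.le
  have hu : ‖‖x‖⁻¹ • x - y‖ ≤ 2 - t := by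
    have := (hyU _ (Finset.mem_image_of_mem _ (Finset.mem_filter.mpr ⟨hx, hx0⟩))).2
    linarith
  simpa [smul_smul, norm_ne_zero_iff.mpr hx0] using
    norm_smul_sub_smul_le_one hy (norm_nonneg x) (hSt x hx).le ht1.le hu

theorem IsASQ.epsFailsIntersection (h : IsASQ X) {ε : ℝ} (hε0 : 0 ≤ ε) (hε : ε < 1) :
    EpsFailsIntersection X ε := fun _ hS _ hη =>
  let ⟨y, hy, hyS⟩ := h.exists_forall_norm_sub_le_one hε0 hε hS
  ⟨y, hy, fun x hx => (hyS x hx).trans (by linarith)⟩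

theorem norm_inv_norm_smul_sub_self {y : X} (hy : y ≠ 0) : ‖‖y‖⁻¹ • y - y‖ = |1 - ‖y‖| := by
  rw [show ‖y‖⁻¹ • y - y = (‖y‖⁻¹ - 1) • y by rw [sub_smul, one_smul], norm_smul,
    Real.norm_eq_abs, ← abs_norm, ← abs_mul, abs_norm, sub_mul,
    inv_mul_cancel₀ (norm_ne_zero_iff.mpr hy), one_mul]

theorem isASQ_of_forall_epsFailsIntersection
    (h : ∀ ε, 0 < ε → ε < 1 → EpsFailsIntersection X ε) : IsASQ X := by
  classical
  intro S hS ε hε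
  set δ := min (ε / 3) (1 / 2)
  have hδ0 : 0 < δ := lt_min (by linarith) (by norm_num)
  have hδ1 : δ ≤ 1 / 2 := min_le_right _ _
  have hδε : δ ≤ ε / 3 := min_le_left _ _
  set S' := S ∪ S.image Neg.neg
  have hS' : ∀ z ∈ S', ‖z‖ = 1 := by
    simp only [S', Finset.mem_union, Finset.mem_image]
    rintro _ (hz | ⟨z, hz, rfl⟩)
    exacts [hS _ hz, (norm_neg z).trans (hS z hz)]
  have hT : ∀ z ∈ S'.image ((1 - δ) • ·), ‖z‖ < 1 := by
    simp only [Finset.mem_image, forall_exists_index, and_imp]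
    rintro _ z hz rfl
    rw [norm_smul, hS' z hz, Real.norm_of_nonneg (by linarith)]
    linarith
  obtain ⟨y, ⟨hy0, hy1⟩, hyT⟩ := h (1 - δ) (by linarith) (by linarith) _ hT δ hδ0
  have hyne : y ≠ 0 := norm_pos_iff.mp (by linarith)
  have hyy : ‖y - ‖y‖⁻¹ • y‖ ≤ δ := by
    rw [norm_sub_rev, norm_inv_norm_smul_sub_self hyne, abs_of_nonneg (by linarith)]
    linarith
  have key : ∀ z ∈ S', ‖z - ‖y‖⁻¹ • y‖ ≤ 1 + ε := fun z hz =>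
    calc ‖z - ‖y‖⁻¹ • y‖ = ‖δ • z + ((1 - δ) • z - y) + (y - ‖y‖⁻¹ • y)‖ := by
          congr 1; module
      _ ≤ ‖δ • z‖ + ‖(1 - δ) • z - y‖ + ‖y - ‖y‖⁻¹ • y‖ := norm_add₃_le
      _ ≤ δ + (1 + δ) + δ := by
          gcongr
          · rw [norm_smul, hS' z hz, Real.norm_of_nonneg hδ0.le, mul_one]
          · exact hyT _ (Finset.mem_image_of_mem _ hz)
      _ ≤ 1 + ε := by linarith
  refine ⟨‖y‖⁻¹ • y, norm_smul_inv_norm hyne, fun x hx => ⟨?_, key x (by simp [S', hx])⟩⟩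
  rw [← norm_neg, neg_add']
  exact key (-x) (by simp [S', hx])

end

theorem stmt_18_general (X : Type*) [NormedAddCommGroup X] [NormedSpace ℝ X] :
    IsASQ X ↔ ∀ ε : ℝ, 0 < ε → ε < 1 → gammaIP X ε = 1 := by
  constructor
  · intro h ε hε0 hε1
    have := h.nontrivial
    exact (gammaIP_eq_one_iff hε1).2 (h.epsFailsIntersection hε0.le hε1)
  · intro h
    have := nontrivial_of_gammaIP_eq_one (by norm_num) (h (1 / 2) (by norm_num) (by norm_num))
    exact isASQ_of_forall_epsFailsIntersection fun ε hε0 hε1 =>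
      (gammaIP_eq_one_iff hε1).1 (h ε hε0 hε1)

theorem stmt_18 (X : Type*) [NormedAddCommGroup X] [NormedSpace ℝ X] [CompleteSpace X] :
    IsASQ X ↔ ∀ ε : ℝ, 0 < ε → ε < 1 → gammaIP X ε = 1 :=
  stmt_18_general X
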